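/- arXiv:2511.16608 — 4 statements merged into one kernel-verified Lean document; each statement's English description precedes it below -/
import Mathlib

section
/- Let σ : X → Y and σ′ : X′ → Y′ be strong formal subdivisions between finite lower Eulerian posets, with rank functions ρ_X, ρ_Y, ρ_{X′}, ρ_{Y′}. Then the componentwise-ordered products X × X′ and Y × Y′, equipped with the rank functions (x, x') ↦ ρ_X(x) + ρ_{X′}(x') and (y, y') ↦ ρ_Y(y) + ρ_{Y′}(y'), are lower Eulerian, and the map σ × σ′ : X × X′ → Y × Y′, (x, x') ↦ (σ(x), σ′(x')), is a strong formal subdivision. -/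
namespace SFSPaper

variable {α β : Type*}

/-- `ρ` is a rank function: it increases by exactly one along covering relations. -/
def IsRankFunction [Preorder α] (ρ : α → ℤ) : Prop :=
  ∀ ⦃z z' : α⦄, z ⋖ z' → ρ z' = ρ z + 1

/-- `σ` is rank-increasing with respect to the rank functions `ρX` and `ρY`. -/
def RankIncreasing [Preorder α] [Preorder β] (ρX : α → ℤ) (ρY : β → ℤ) (σ : α → β) : Prop :=
  ∀ x : α, ρX x ≤ ρY (σ x)

/-- `σ` is strongly surjective. -/
def StronglySurjective [Preorder α] [Preorder β] (ρX : α → ℤ) (ρY : β → ℤ) (σ : α → β) : Prop :=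
  Function.Surjective σ ∧
    ∀ (x : α) (y : β), σ x ≤ y → ∃ x' : α, x ≤ x' ∧ ρX x' = ρY y ∧ σ x' = y

/-- The alternating sum `∑_{z ≤ w ≤ z'} (-1)^(ρ w)`. -/
noncomputable def intervalEulerSum [Preorder α] (ρ : α → ℤ) (z z' : α) : ℚ :=
  ∑ᶠ (w : α) (_ : z ≤ w ∧ w ≤ z'), (-1 : ℚ) ^ ρ w

/-- A poset is lower Eulerian with respect to `ρ` if `ρ` is a rank function, there is a
unique minimal (i.e. least) element, and every nontrivial interval has as many elements of even
rank as of odd rank. -/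
def LowerEulerian [PartialOrder α] (ρ : α → ℤ) : Prop :=
  IsRankFunction ρ ∧ (∃ b : α, ∀ z : α, b ≤ z) ∧
    ∀ z z' : α, z < z' → intervalEulerSum ρ z z' = 0

/-- Eulerian: lower Eulerian with a unique maximal element. -/
def Eulerian [PartialOrder α] (ρ : α → ℤ) : Prop :=
  LowerEulerian ρ ∧ ∃ t : α, ∀ z : α, z ≤ t

/-- Strong formal subdivision. -/
def StrongFormalSubdivision [PartialOrder α] [PartialOrder β]
    (ρX : α → ℤ) (ρY : β → ℤ) (σ : α → β) : Prop :=
  Monotone σ ∧ RankIncreasing ρX ρY σ ∧ StronglySurjective ρX ρY σ ∧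
    ∀ (x : α) (y : β), σ x ≤ y →
      (∑ᶠ (x' : α) (_ : x ≤ x' ∧ σ x' = y), (-1 : ℚ) ^ (ρY y - ρX x')) = 1

/-- `q` is join-admissible: every `z` has a join with `q`. -/
def JoinAdmissible [Preorder α] (q : α) : Prop :=
  ∀ z : α, ∃ j : α, IsLeast {w : α | z ≤ w ∧ q ≤ w} j

/-- The rank of a poset: the maximal length of a chain `z_0 < z_1 < ⋯ < z_s`. -/
noncomputable def posetRank (α : Type*) [Preorder α] : ℕ :=
  sSup {n : ℕ | ∃ c : Fin (n + 1) → α, StrictMono c}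

/-- A poset is graded if all of its maximal chains have the same length (cardinality). -/
def GradedPoset (α : Type*) [Preorder α] : Prop :=
  ∀ s t : Set α, IsMaxChain (· ≤ ·) s → IsMaxChain (· ≤ ·) t → s.ncard = t.ncard

/-!
Everything factors over the product. A cover in `X × X'` moves exactly one coordinate by a cover,
so the sum of rank functions is a rank function. Intervals and fibres of `σ × σ'` are products of
intervals and fibres, and the sign `(-1)^rank` is multiplicative for the sum rank, so each
alternating sum over `X × X'` is the product of the two factor sums: an Eulerian sum vanishes
because one factor interval is nontrivial, and a fibre sum equals `1 * 1`.
-/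

lemma finsum_cond_prod_mul {R : Type*} [Finite α] [Finite β] [NonUnitalNonAssocSemiring R]
    (P : α → Prop) (Q : β → Prop) (f : α → R) (g : β → R) :
    (∑ᶠ (p : α × β) (_ : P p.1 ∧ Q p.2), f p.1 * g p.2)
      = (∑ᶠ (a : α) (_ : P a), f a) * ∑ᶠ (b : β) (_ : Q b), g b := by
  classical
  have := Fintype.ofFinite α
  have := Fintype.ofFinite β
  simp only [finsum_eq_if, finsum_eq_sum_of_fintype, Fintype.sum_prod_type, Finset.sum_mul_sum,
    ite_zero_mul_ite_zero]

lemma neg_one_zpow_add {K : Type*} [DivisionRing K] (m n : ℤ) :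
    (-1 : K) ^ (m + n) = (-1) ^ m * (-1) ^ n :=
  zpow_add₀ (by norm_num) m n

section Prod

variable {ρ : α → ℤ} {ρ' : β → ℤ}

lemma IsRankFunction.prod [PartialOrder α] [PartialOrder β]
    (hρ : IsRankFunction ρ) (hρ' : IsRankFunction ρ') :
    IsRankFunction fun p : α × β => ρ p.1 + ρ' p.2 := by
  intro z w h
  dsimp only
  rcases Prod.covBy_iff.1 h with ⟨h₁, h₂⟩ | ⟨h₂, h₁⟩
  · rw [hρ h₁, h₂]; ring
  · rw [hρ' h₂, h₁]; ring

lemma intervalEulerSum_prod [Preorder α] [Preorder β] [Finite α] [Finite β] (z w : α × β) :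
    intervalEulerSum (fun p : α × β => ρ p.1 + ρ' p.2) z w
      = intervalEulerSum ρ z.1 w.1 * intervalEulerSum ρ' z.2 w.2 := by
  rw [intervalEulerSum, intervalEulerSum, intervalEulerSum, ← finsum_cond_prod_mul]
  simp only [Prod.le_def, and_and_and_comm, neg_one_zpow_add]

lemma LowerEulerian.prod [PartialOrder α] [PartialOrder β] [Finite α] [Finite β]
    (hρ : LowerEulerian ρ) (hρ' : LowerEulerian ρ') :
    LowerEulerian fun p : α × β => ρ p.1 + ρ' p.2 := by
  obtain ⟨hrank, ⟨b, hb⟩, heuler⟩ := hρ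
  obtain ⟨hrank', ⟨b', hb'⟩, heuler'⟩ := hρ'
  refine ⟨hrank.prod hrank', ⟨(b, b'), fun z => ⟨hb z.1, hb' z.2⟩⟩, fun z w hzw => ?_⟩
  rw [intervalEulerSum_prod]
  rcases Prod.lt_iff.1 hzw with ⟨hlt, -⟩ | ⟨-, hlt⟩
  · rw [heuler _ _ hlt, zero_mul]
  · rw [heuler' _ _ hlt, mul_zero]

end Prod

section ProdMap

variable {γ δ : Type*} {ρα : α → ℤ} {ρβ : β → ℤ} {ργ : γ → ℤ} {ρδ : δ → ℤ} {σ : α → β} {τ : γ → δ}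

lemma RankIncreasing.prodMap [Preorder α] [Preorder β] [Preorder γ] [Preorder δ]
    (hσ : RankIncreasing ρα ρβ σ) (hτ : RankIncreasing ργ ρδ τ) :
    RankIncreasing (fun p : α × γ => ρα p.1 + ργ p.2) (fun q : β × δ => ρβ q.1 + ρδ q.2)
      (Prod.map σ τ) :=
  fun p => add_le_add (hσ p.1) (hτ p.2)

lemma StronglySurjective.prodMap [Preorder α] [Preorder β] [Preorder γ] [Preorder δ]
    (hσ : StronglySurjective ρα ρβ σ) (hτ : StronglySurjective ργ ρδ τ) :
    StronglySurjective (fun p : α × γ => ρα p.1 + ργ p.2) (fun q : β × δ => ρβ q.1 + ρδ q.2)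
      (Prod.map σ τ) := by
  refine ⟨hσ.1.prodMap hτ.1, fun x y hxy => ?_⟩
  obtain ⟨a, hxa, hρa, hσa⟩ := hσ.2 x.1 y.1 hxy.1
  obtain ⟨c, hxc, hρc, hτc⟩ := hτ.2 x.2 y.2 hxy.2
  exact ⟨(a, c), ⟨hxa, hxc⟩, by simp only [hρa, hρc], Prod.ext hσa hτc⟩

lemma fiberSum_prodMap [Preorder α] [Preorder γ] [Finite α] [Finite γ] (x : α × γ) (y : β × δ) :
    (∑ᶠ (p : α × γ) (_ : x ≤ p ∧ Prod.map σ τ p = y),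
        (-1 : ℚ) ^ (ρβ y.1 + ρδ y.2 - (ρα p.1 + ργ p.2)))
      = (∑ᶠ (a : α) (_ : x.1 ≤ a ∧ σ a = y.1), (-1 : ℚ) ^ (ρβ y.1 - ρα a))
        * ∑ᶠ (c : γ) (_ : x.2 ≤ c ∧ τ c = y.2), (-1 : ℚ) ^ (ρδ y.2 - ργ c) := by
  rw [← finsum_cond_prod_mul]
  simp only [Prod.le_def, Prod.ext_iff, Prod.map_fst, Prod.map_snd, and_and_and_comm,
    ← neg_one_zpow_add, add_sub_add_comm]

lemma StrongFormalSubdivision.prodMap [PartialOrder α] [PartialOrder β] [PartialOrder γ]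
    [PartialOrder δ] [Finite α] [Finite γ]
    (hσ : StrongFormalSubdivision ρα ρβ σ) (hτ : StrongFormalSubdivision ργ ρδ τ) :
    StrongFormalSubdivision (fun p : α × γ => ρα p.1 + ργ p.2) (fun q : β × δ => ρβ q.1 + ρδ q.2)
      (Prod.map σ τ) := by
  obtain ⟨hmono, hrank, hsurj, hfiber⟩ := hσ
  obtain ⟨hmono', hrank', hsurj', hfiber'⟩ := hτ
  refine ⟨hmono.prodMap hmono', hrank.prodMap hrank', hsurj.prodMap hsurj', fun x y hxy => ?_⟩
  rw [fiberSum_prodMap, hfiber _ _ hxy.1, hfiber' _ _ hxy.2, mul_one]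

end ProdMap

/-- products of subdivisions. If `σ : X → Y` and `σ' : X' → Y'` are
strong formal subdivisions between finite lower Eulerian posets, then `X × X'` and
`Y × Y'` with the sum rank functions are lower Eulerian and
`σ × σ' : X × X' → Y × Y'` is a strong formal subdivision. -/
theorem prod_strongFormalSubdivision {X Y X' Y' : Type*}
    [PartialOrder X] [PartialOrder Y] [PartialOrder X'] [PartialOrder Y']
    [Finite X] [Finite Y] [Finite X'] [Finite Y']
    (ρX : X → ℤ) (ρY : Y → ℤ) (ρX' : X' → ℤ) (ρY' : Y' → ℤ)
    (hX : LowerEulerian ρX) (hY : LowerEulerian ρY)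
    (hX' : LowerEulerian ρX') (hY' : LowerEulerian ρY')
    (σ : X → Y) (hσ : StrongFormalSubdivision ρX ρY σ)
    (σ' : X' → Y') (hσ' : StrongFormalSubdivision ρX' ρY' σ') :
    LowerEulerian (fun p : X × X' => ρX p.1 + ρX' p.2) ∧
    LowerEulerian (fun p : Y × Y' => ρY p.1 + ρY' p.2) ∧
    StrongFormalSubdivision (fun p : X × X' => ρX p.1 + ρX' p.2)
      (fun p : Y × Y' => ρY p.1 + ρY' p.2) (Prod.map σ σ') :=
  ⟨hX.prod hX', hY.prod hY', hσ.prodMap hσ'⟩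

end SFSPaper
end

section
/- Let σ : X → Y, σ′ : X′ → Y′, φ₁ : X → X′ and φ₂ : Y → Y′ be strong formal subdivisions between finite lower Eulerian posets (with rank functions ρ_X, ρ_Y, ρ_{X′}, ρ_{Y′}) such that σ′ ∘ φ₁ = φ₂ ∘ σ. Then the map φ : Cyl(σ) → Cyl(σ′), defined by φ(z) = φ₁(z) for z ∈ X and φ(z) = φ₂(z) for z ∈ Y, is a strong formal subdivision with respect to the rank functions ρ_{Cyl(σ)} and ρ_{Cyl(σ′)}. -/
namespace SFSPaper

variable {α β : Type*}

variable {α β : Type*}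

/-- The order relation of the non-Hausdorff mapping cylinder of `σ : α → β` on `α ⊕ β`. -/
def cylLE [LE α] [LE β] (σ : α → β) : α ⊕ β → α ⊕ β → Prop
  | Sum.inl x, Sum.inl x' => x ≤ x'
  | Sum.inl x, Sum.inr y => σ x ≤ y
  | Sum.inr _, Sum.inl _ => False
  | Sum.inr y, Sum.inr y' => y ≤ y'

/-- The non-Hausdorff mapping cylinder of an order-preserving map `σ : α → β`, as a
partial order on `α ⊕ β`. -/
def cylPartialOrder [PartialOrder α] [PartialOrder β] (σ : α → β) (hσ : Monotone σ) :
    PartialOrder (α ⊕ β) where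
  le := cylLE σ
  lt a b := cylLE σ a b ∧ ¬ cylLE σ b a
  lt_iff_le_not_ge _ _ := Iff.rfl
  le_refl := by rintro (x | y) <;> simp [cylLE]
  le_trans := by
    rintro (x | y) (x' | y') (x'' | y'') hab hbc <;> simp only [cylLE] at * <;>
      first
        | exact hab.trans hbc
        | exact (hσ hab).trans hbc
  le_antisymm := by
    rintro (x | y) (x' | y') hab hba <;> simp only [cylLE] at *
    · exact congrArg Sum.inl (le_antisymm hab hba)
    · exact congrArg Sum.inr (le_antisymm hab hba)

/-- The rank function on the mapping cylinder: `ρX` on `X` and `ρY + 1` on `Y`. -/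
def cylRank (ρX : α → ℤ) (ρY : β → ℤ) : α ⊕ β → ℤ :=
  Sum.elim ρX fun y => ρY y + 1


/-! The map `φ = φ₁ ⊔ φ₂` preserves both layers of the cylinder, so its fibre over a point of `X'`
lies in `X` and its fibre over a point of `Y'` lies in `Y`. The cylinder rank shifts `Y` and `Y'`
by the same `1`, so the exponents `ρ(w) - ρ(z')` are unchanged, and every condition on `φ`
reduces to the same condition on `φ₁` or on `φ₂`. The only comparisons between the layers are
`x ≤ y ↔ σ x ≤ y`, and the commutation `σ' ∘ φ₁ = φ₂ ∘ σ` transports them. -/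

theorem finsum_cond_eq_finsum_cond_comp {M ι κ : Type*} [AddCommMonoid M] {g : κ → ι}
    (hg : Function.Injective g) {p : ι → Prop} (hp : ∀ i, p i → i ∈ Set.range g) (f : ι → M) :
    ∑ᶠ (i) (_ : p i), f i = ∑ᶠ (k) (_ : p (g k)), f (g k) := by
  have hset : {i | p i} = g '' {k | p (g k)} := by
    ext i
    constructor
    · intro hi
      obtain ⟨k, rfl⟩ := hp i hi
      exact ⟨k, hi, rfl⟩
    · rintro ⟨k, hk, rfl⟩
      exact hk
  calc ∑ᶠ (i) (_ : p i), f i = ∑ᶠ i ∈ g '' {k | p (g k)}, f i := by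
        rw [← hset]; rfl
    _ = ∑ᶠ (k) (_ : p (g k)), f (g k) := finsum_mem_image hg.injOn

section CylinderFibres

variable {X Y X' Y' : Type*} [LE X] [LE Y] {σ : X → Y} {φ₁ : X → X'} {φ₂ : Y → Y'}
  {ρX : X → ℤ} {ρY : Y → ℤ} {ρX' : X' → ℤ} {ρY' : Y' → ℤ}

theorem finsum_cylFibre_inl (z : X ⊕ Y) (x' : X') :
    ∑ᶠ (z') (_ : cylLE σ z z' ∧ Sum.map φ₁ φ₂ z' = .inl x'),
        (-1 : ℚ) ^ (cylRank ρX' ρY' (.inl x') - cylRank ρX ρY z') =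
      ∑ᶠ (x'') (_ : cylLE σ z (.inl x'') ∧ φ₁ x'' = x'), (-1 : ℚ) ^ (ρX' x' - ρX x'') := by
  rw [finsum_cond_eq_finsum_cond_comp Sum.inl_injective]
  · simp only [Sum.map_inl, Sum.inl.injEq]
    rfl
  · rintro (x'' | y'') ⟨-, hmap⟩
    · exact ⟨x'', rfl⟩
    · exact absurd hmap Sum.inr_ne_inl

theorem finsum_cylFibre_inr (z : X ⊕ Y) (y' : Y') :
    ∑ᶠ (z') (_ : cylLE σ z z' ∧ Sum.map φ₁ φ₂ z' = .inr y'),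
        (-1 : ℚ) ^ (cylRank ρX' ρY' (.inr y') - cylRank ρX ρY z') =
      ∑ᶠ (y'') (_ : cylLE σ z (.inr y'') ∧ φ₂ y'' = y'), (-1 : ℚ) ^ (ρY' y' - ρY y'') := by
  rw [finsum_cond_eq_finsum_cond_comp Sum.inr_injective]
  · simp only [Sum.map_inr, Sum.inr.injEq, cylRank, Sum.elim_inr, add_sub_add_right_eq_sub]
  · rintro (x'' | y'') ⟨-, hmap⟩
    · exact absurd hmap Sum.inl_ne_inr
    · exact ⟨y'', rfl⟩

end CylinderFibres

section MappingCylinder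

variable {X Y X' Y' : Type*} [Preorder X] [Preorder Y] [Preorder X'] [Preorder Y']
  {σ : X → Y} {σ' : X' → Y'} {φ₁ : X → X'} {φ₂ : Y → Y'}
  {ρX : X → ℤ} {ρY : Y → ℤ} {ρX' : X' → ℤ} {ρY' : Y' → ℤ}

theorem cylLE_sumMap (hφ₁ : Monotone φ₁) (hφ₂ : Monotone φ₂) (hcomm : σ' ∘ φ₁ = φ₂ ∘ σ)
    {z w : X ⊕ Y} (h : cylLE σ z w) : cylLE σ' (Sum.map φ₁ φ₂ z) (Sum.map φ₁ φ₂ w) := by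
  rcases z with x | y <;> rcases w with x' | y'
  · exact hφ₁ h
  · show σ' (φ₁ x) ≤ φ₂ y'
    exact (congrFun hcomm x).trans_le (hφ₂ h)
  · exact h.elim
  · exact hφ₂ h

theorem cylRank_le_cylRank_sumMap (hφ₁ : RankIncreasing ρX ρX' φ₁)
    (hφ₂ : RankIncreasing ρY ρY' φ₂) (z : X ⊕ Y) :
    cylRank ρX ρY z ≤ cylRank ρX' ρY' (Sum.map φ₁ φ₂ z) := by
  rcases z with x | y
  · exact hφ₁ x
  · exact (add_le_add_iff_right 1).2 (hφ₂ y)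

theorem exists_cylLE_cylRank_eq_sumMap_eq (hφ₁ : StronglySurjective ρX ρX' φ₁)
    (hφ₂ : StronglySurjective ρY ρY' φ₂) (hcomm : σ' ∘ φ₁ = φ₂ ∘ σ) {z : X ⊕ Y} {w : X' ⊕ Y'}
    (h : cylLE σ' (Sum.map φ₁ φ₂ z) w) :
    ∃ z', cylLE σ z z' ∧ cylRank ρX ρY z' = cylRank ρX' ρY' w ∧ Sum.map φ₁ φ₂ z' = w := by
  rcases z with x | y <;> rcases w with x' | y'
  · obtain ⟨x'', hle, hrank, rfl⟩ := hφ₁.2 x x' h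
    exact ⟨.inl x'', hle, hrank, rfl⟩
  · obtain ⟨y'', hle, hrank, rfl⟩ := hφ₂.2 (σ x) y' ((congrFun hcomm x).symm.trans_le h)
    exact ⟨.inr y'', hle, congrArg (· + 1) hrank, rfl⟩
  · exact h.elim
  · obtain ⟨y'', hle, hrank, rfl⟩ := hφ₂.2 y y' h
    exact ⟨.inr y'', hle, congrArg (· + 1) hrank, rfl⟩

end MappingCylinder

theorem cyl_map_strongFormalSubdivision_general {X Y X' Y' : Type*}
    [PartialOrder X] [PartialOrder Y] [PartialOrder X'] [PartialOrder Y']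
    (ρX : X → ℤ) (ρY : Y → ℤ) (ρX' : X' → ℤ) (ρY' : Y' → ℤ)
    (σ : X → Y) (hσ : StrongFormalSubdivision ρX ρY σ)
    (σ' : X' → Y') (hσ' : StrongFormalSubdivision ρX' ρY' σ')
    (φ₁ : X → X') (hφ₁ : StrongFormalSubdivision ρX ρX' φ₁)
    (φ₂ : Y → Y') (hφ₂ : StrongFormalSubdivision ρY ρY' φ₂)
    (hcomm : σ' ∘ φ₁ = φ₂ ∘ σ) :
    @StrongFormalSubdivision (X ⊕ Y) (X' ⊕ Y')
      (cylPartialOrder σ hσ.1) (cylPartialOrder σ' hσ'.1)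
      (cylRank ρX ρY) (cylRank ρX' ρY') (Sum.map φ₁ φ₂) := by
  obtain ⟨hmono₁, hrank₁, hsurj₁, hfibre₁⟩ := hφ₁
  obtain ⟨hmono₂, hrank₂, hsurj₂, hfibre₂⟩ := hφ₂
  refine ⟨fun _ _ => cylLE_sumMap hmono₁ hmono₂ hcomm, cylRank_le_cylRank_sumMap hrank₁ hrank₂,
    ⟨hsurj₁.1.sumMap hsurj₂.1, fun _ _ => exists_cylLE_cylRank_eq_sumMap_eq hsurj₁ hsurj₂ hcomm⟩,
    ?_⟩
  rintro (x | y) (x' | y') h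
  · exact (finsum_cylFibre_inl _ _).trans (hfibre₁ x x' h)
  · exact (finsum_cylFibre_inr _ _).trans
      (hfibre₂ (σ x) y' ((congrFun hcomm x).symm.trans_le h))
  · exact h.elim
  · exact (finsum_cylFibre_inr _ _).trans (hfibre₂ y y' h)

/-- Given strong formal subdivisions `σ, σ', φ₁, φ₂` between finite
lower Eulerian posets with `σ' ∘ φ₁ = φ₂ ∘ σ`, the induced map
`φ = φ₁ ⊔ φ₂ : Cyl(σ) → Cyl(σ')` is a strong formal subdivision for the cylinder rank
functions. -/
theorem cyl_map_strongFormalSubdivision {X Y X' Y' : Type*}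
    [PartialOrder X] [PartialOrder Y] [PartialOrder X'] [PartialOrder Y']
    [Finite X] [Finite Y] [Finite X'] [Finite Y']
    (ρX : X → ℤ) (ρY : Y → ℤ) (ρX' : X' → ℤ) (ρY' : Y' → ℤ)
    (hX : LowerEulerian ρX) (hY : LowerEulerian ρY)
    (hX' : LowerEulerian ρX') (hY' : LowerEulerian ρY')
    (σ : X → Y) (hσ : StrongFormalSubdivision ρX ρY σ)
    (σ' : X' → Y') (hσ' : StrongFormalSubdivision ρX' ρY' σ')
    (φ₁ : X → X') (hφ₁ : StrongFormalSubdivision ρX ρX' φ₁)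
    (φ₂ : Y → Y') (hφ₂ : StrongFormalSubdivision ρY ρY' φ₂)
    (hcomm : σ' ∘ φ₁ = φ₂ ∘ σ) :
    @StrongFormalSubdivision (X ⊕ Y) (X' ⊕ Y')
      (cylPartialOrder σ hσ.1) (cylPartialOrder σ' hσ'.1)
      (cylRank ρX ρY) (cylRank ρX' ρY') (Sum.map φ₁ φ₂) :=
  cyl_map_strongFormalSubdivision_general ρX ρY ρX' ρY' σ hσ σ' hσ' φ₁ hφ₁ φ₂ hφ₂ hcomm

end SFSPaper
end

section
/- Let Γ and Γ′ be finite lower Eulerian posets with rank functions ρ_Γ and ρ_{Γ′}, let q ∈ Γ and q′ ∈ Γ′ be join-admissible elements with q ≠ 0̂_Γ and q′ ≠ 0̂_{Γ′}, and let φ : Γ → Γ′ be a strong formal subdivision such that φ(q) = q′ and φ(z ∨ q) = φ(z) ∨ q′ for all z ∈ Γ with q ≰ z. Then φ⁻¹({z' ∈ Γ′ : q′ ≤ z'}) = {z ∈ Γ : q ≤ z}. -/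
namespace SFSPaper

variable {α β : Type*}

/-!
If `q' ≤ φ z` but `q ≰ z`, take such a `z` maximal and put `w = z ∨ q`. The join condition
gives `φ w = φ z`, and maximality of `z` forces every other element of the fibre of `φ z`
above `z` to lie above `w`. So the alternating fibre sums over `[z, ·)` and `[w, ·)`, which
both equal `1` for a strong formal subdivision, differ by the single nonzero term at `z`.
-/

theorem StrongFormalSubdivision.exists_fiber_lt_not_ge [PartialOrder α] [PartialOrder β]
    [Finite α] {ρX : α → ℤ} {ρY : β → ℤ} {σ : α → β}
    (hσ : StrongFormalSubdivision ρX ρY σ) {x w : α} (hxw : x < w) (hσw : σ w = σ x) :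
    ∃ x', x < x' ∧ σ x' = σ x ∧ ¬ w ≤ x' := by
  by_contra! h
  have hfiber : {x' | x ≤ x' ∧ σ x' = σ x} = insert x {x' | w ≤ x' ∧ σ x' = σ x} := by
    ext x'
    simp only [Set.mem_insert_iff, Set.mem_ofPred_eq]
    constructor
    · rintro ⟨hxx', hσx'⟩
      rcases hxx'.eq_or_lt with rfl | hlt
      · exact Or.inl rfl
      · exact Or.inr ⟨h x' hlt hσx', hσx'⟩
    · rintro (rfl | ⟨hwx', hσx'⟩)
      · exact ⟨le_rfl, rfl⟩
      · exact ⟨hxw.le.trans hwx', hσx'⟩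
  have hx : x ∉ {x' | w ≤ x' ∧ σ x' = σ x} := fun hx => hxw.not_ge hx.1
  have hsum_x : ∑ᶠ x' ∈ {x' | x ≤ x' ∧ σ x' = σ x}, (-1 : ℚ) ^ (ρY (σ x) - ρX x') = 1 :=
    hσ.2.2.2 x (σ x) le_rfl
  have hsum_w : ∑ᶠ x' ∈ {x' | w ≤ x' ∧ σ x' = σ x}, (-1 : ℚ) ^ (ρY (σ x) - ρX x') = 1 :=
    hσ.2.2.2 w (σ x) hσw.le
  rw [hfiber, finsum_mem_insert _ hx (Set.toFinite _), hsum_w] at hsum_x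
  exact zpow_ne_zero _ (by norm_num : (-1 : ℚ) ≠ 0) (by linarith)

theorem preimage_upperSet_eq_general {Γ Γ' : Type*} [PartialOrder Γ] [PartialOrder Γ']
    [Finite Γ]
    (ρ : Γ → ℤ) (ρ' : Γ' → ℤ)
    (q : Γ) (q' : Γ')
    (jn : Γ → Γ) (hjn : ∀ z : Γ, IsLeast {w : Γ | z ≤ w ∧ q ≤ w} (jn z))
    (jn' : Γ' → Γ') (hjn' : ∀ z : Γ', IsLeast {w : Γ' | z ≤ w ∧ q' ≤ w} (jn' z))
    (φ : Γ → Γ') (hφ : StrongFormalSubdivision ρ ρ' φ)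
    (hφq : φ q = q') (hφjoin : ∀ z : Γ, ¬ q ≤ z → φ (jn z) = jn' (φ z)) :
    φ ⁻¹' {z' : Γ' | q' ≤ z'} = {z : Γ | q ≤ z} := by
  have hle : ∀ z, q' ≤ φ z → q ≤ z := by
    intro z
    induction z using WellFoundedGT.induction with
    | _ z ih =>
      intro hz
      by_contra hqz
      obtain ⟨⟨hzw, hqw⟩, hw_least⟩ := hjn z
      have hφw : φ (jn z) = φ z := by
        rw [hφjoin z hqz, (hjn' (φ z)).unique ⟨⟨le_rfl, hz⟩, fun _ hy => hy.1⟩]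
      have hz_lt_w : z < jn z := hzw.lt_of_not_ge fun hwz => hqz (hqw.trans hwz)
      obtain ⟨x, hzx, hφx, hwx⟩ := hφ.exists_fiber_lt_not_ge hz_lt_w hφw
      exact hwx (hw_least ⟨hzx.le, ih x hzx (hφx ▸ hz)⟩)
  ext z
  exact ⟨hle z, fun hz => hφq ▸ hφ.1 hz⟩

/-- Let `φ : Γ → Γ'` be a strong formal subdivision between finite
lower Eulerian posets with join-admissible non-minimal elements `q ∈ Γ`, `q' ∈ Γ'`
(with join functions `jn`, `jn'`), such that `φ(q) = q'` and
`φ(z ∨ q) = φ(z) ∨ q'` for all `z` with `q ≰ z`. Then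
`φ⁻¹(Γ'_{≥ q'}) = Γ_{≥ q}`. -/
theorem preimage_upperSet_eq {Γ Γ' : Type*} [PartialOrder Γ] [PartialOrder Γ']
    [Finite Γ] [Finite Γ']
    (ρ : Γ → ℤ) (ρ' : Γ' → ℤ) (hΓ : LowerEulerian ρ) (hΓ' : LowerEulerian ρ')
    (b : Γ) (hb : ∀ z : Γ, b ≤ z) (b' : Γ') (hb' : ∀ z : Γ', b' ≤ z)
    (q : Γ) (hq : q ≠ b) (q' : Γ') (hq' : q' ≠ b')
    (jn : Γ → Γ) (hjn : ∀ z : Γ, IsLeast {w : Γ | z ≤ w ∧ q ≤ w} (jn z))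
    (jn' : Γ' → Γ') (hjn' : ∀ z : Γ', IsLeast {w : Γ' | z ≤ w ∧ q' ≤ w} (jn' z))
    (φ : Γ → Γ') (hφ : StrongFormalSubdivision ρ ρ' φ)
    (hφq : φ q = q') (hφjoin : ∀ z : Γ, ¬ q ≤ z → φ (jn z) = jn' (φ z)) :
    φ ⁻¹' {z' : Γ' | q' ≤ z'} = {z : Γ | q ≤ z} :=
  preimage_upperSet_eq_general ρ ρ' q q' jn hjn jn' hjn' φ hφ hφq hφjoin

end SFSPaper
end

section
/- Let Γ be a finite Eulerian poset of positive rank with natural rank function ρ_Γ, and let q be a join-admissible element of Γ with q ∉ {0̂_Γ, 1̂_Γ}. Set X = Γ ∖ {z ∈ Γ : q ≤ z} and Y = {z ∈ Γ : q ≤ z} = [q, 1̂_Γ], and for y ∈ Y write X_{≤y} = {x ∈ X : x ∨ q ≤ y} and X_{<y} = {x ∈ X : x ∨ q < y}; write ∂X = X_{<1̂_Γ}. Then, in the free associative ℚ-algebra ℚ⟨a,b⟩ on two noncommuting generators a and b, the following identity holds: Ψ(Γ) = ℓΨ(X) + (1/2)·[ Ψ(overline{∂X})·(a+b) + Ψ([0̂_Γ,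 q])·(a+b)·Ψ([q, 1̂_Γ]) + ∑_{y ∈ Γ, q < y < 1̂_Γ} ( ℓΨ(X_{≤y})·(a+b) + Ψ(overline{X_{<y}})·(ab+ba) )·Ψ([y, 1̂_Γ]) ], where each interval is regarded as an Eulerian poset with its natural rank function. (This identity is the image of the cd-index identity Φ(Γ) = ℓΦ(X) + ½[Φ(overline{∂X})c + Φ([0̂_Γ,q])cΦ(Y) + ∑_{q<y<1̂_Γ}(ℓΦ(X_{≤y})c + Φ(overline{X_{<y}})d)Φ([y,1̂_Γ])] under the injective substitution c ↦ a+b, d ↦ ab+ba.) -/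
namespace SFSPaper

variable {α β : Type*}

/-- The free `ℚ`-algebra `ℚ⟨a,b⟩` on two noncommuting generators. -/
noncomputable abbrev ABAlg : Type := FreeAlgebra ℚ (Fin 2)

/-- The generator `a`. -/
noncomputable def aGen : ABAlg := FreeAlgebra.ι ℚ 0

/-- The generator `b`. -/
noncomputable def bGen : ABAlg := FreeAlgebra.ι ℚ 1

/-- The word `w_S = w_1 ⋯ w_n`, with `w_i = b` if `i ∈ S` and `w_i = a - b` otherwise. -/
noncomputable def wordOf (S : Finset ℕ) (n : ℕ) : ABAlg :=
  ((List.range n).map fun i => if i + 1 ∈ S then bGen else aGen - bGen).prod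

/-- The flag number `f_S`: the number of chains contained in `P` (the set of elements
strictly between the minimal and the maximal element of the poset under consideration,
inside an ambient poset `α`) whose set of `ρ`-ranks is exactly `S`. -/
noncomputable def flagCount {α : Type*} [PartialOrder α] (P : Set α) (ρ : α → ℤ)
    (S : Finset ℕ) : ℕ :=
  Nat.card {C : Finset α // ↑C ⊆ P ∧ IsChain (· ≤ ·) (↑C : Set α) ∧
    C.card = S.card ∧ C.image ρ = S.image (fun i : ℕ => (i : ℤ))}

/-- The ab-polynomial `Ψ = ∑_{S ⊆ {1,…,n}} f_S · w_S` of the poset whose set of elements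
strictly between the minimal and the maximal element is `P`, with (natural) rank function
`ρ` and maximal element of rank `n + 1`. -/
noncomputable def abPsi {α : Type*} [PartialOrder α] (P : Set α) (ρ : α → ℤ) (n : ℕ) :
    ABAlg :=
  ∑ᶠ (S : Finset ℕ) (_ : S ⊆ Finset.Icc 1 n), (flagCount P ρ S : ABAlg) * wordOf S n

/-- The ab-polynomial of the semisuspension `Σ̃B` of a near-Eulerian poset `B` of rank
`n`, where `P = B ∖ {0̂_B}` and `Q = ∂B ∖ {0̂_B}`: chains avoiding the adjoined element
`ẑ` are exactly the chains in `P`, while chains through `ẑ` (which has rank `n`) consist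
of a chain in `Q` together with `ẑ`. -/
noncomputable def abPsiSemi {α : Type*} [PartialOrder α] (P Q : Set α) (ρ : α → ℤ)
    (n : ℕ) : ABAlg :=
  abPsi P ρ n +
    ∑ᶠ (S : Finset ℕ) (_ : S ⊆ Finset.Icc 1 n ∧ n ∈ S),
      (flagCount Q ρ (S.erase n) : ABAlg) * wordOf S n

/-- The local ab-polynomial `ℓΨ(B) = Ψ(Σ̃B) - Ψ(overline{∂B})·(a + b)` of a near-Eulerian
poset `B` of rank `n` with `P = B ∖ {0̂_B}` and `Q = ∂B ∖ {0̂_B}` (so that `Q` is the set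
of elements of `overline{∂B}` strictly between its minimal and its maximal element, and
`overline{∂B}` has rank `n`). -/
noncomputable def localAbPsi {α : Type*} [PartialOrder α] (P Q : Set α) (ρ : α → ℤ)
    (n : ℕ) : ABAlg :=
  abPsiSemi P Q ρ n - abPsi Q ρ (n - 1) * (aGen + bGen)

/-!
Expanding `Ψ` over chains turns every term into a sum of words `w(C)` over chains `C`, where
`w(C)` records the set of ranks met by `C`. A chain of `Γ ∖ {0̂, 1̂}` meeting `Y` is split at its
least element `y ∈ Y` into a chain of `X_{≤y}`, the element `y` and a chain of `(y, 1̂)`. Since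
`a + b = (a - b) + 2b`, the product `Ψ(X_{≤y})(a + b)Ψ([y, 1̂])` counts the chains `C ∪ D`
avoiding `y` once and the chains `C ∪ {y} ∪ D` through `y` twice. Regrouping the chains `C ∪ D`
by the join of `C` and `q` (the least admissible `y`) shows that, summed over `y`, they give
`Ψ(∂X)(a - b)` plus, for each `q < y < 1̂`, the chains built on `X_{<y}` with or without `y`.
These are exactly what `ℓΨ(X_{≤y})(a + b) + Ψ(X_{<y})(ab + ba)` removes from
`Ψ(X_{≤y})(a + b)`, so the factor `½` cancels and every chain through `Y` is counted once.
-/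

open Finset

lemma _root_.IsChain.injOn_of_strictMonoOn {α β : Type*} [PartialOrder α] [Preorder β]
    {P C : Set α} {ρ : α → β} (hC : IsChain (· ≤ ·) C) (hρ : StrictMonoOn ρ P) (hCP : C ⊆ P) :
    Set.InjOn ρ C := by
  intro x hx y hy hxy
  by_contra hne
  rcases hC hx hy hne with h | h
  · exact (hρ (hCP hx) (hCP hy) (h.lt_of_ne hne)).ne hxy
  · exact (hρ (hCP hy) (hCP hx) (h.lt_of_ne (Ne.symm hne))).ne hxy.symm

lemma _root_.IsChain.exists_isLeast {α : Type*} [PartialOrder α] [WellFoundedLT α] {s : Set α}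
    (hs : IsChain (· ≤ ·) s) (hne : s.Nonempty) : ∃ a, IsLeast s a := by
  obtain ⟨a, ha⟩ := exists_minimal_of_wellFoundedLT (· ∈ s) hne
  have hs' : IsChain (· ≥ ·) s := hs.symm
  exact ⟨a, hs'.directedOn.minimal_iff_isLeast.mp ha⟩

lemma _root_.IsChain.exists_isGreatest {α : Type*} [PartialOrder α] [WellFoundedGT α]
    {s : Set α} (hs : IsChain (· ≤ ·) s) (hne : s.Nonempty) : ∃ a, IsGreatest s a := by
  obtain ⟨a, ha⟩ := exists_maximal_of_wellFoundedGT (· ∈ s) hne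
  exact ⟨a, hs.directedOn.maximal_iff_isGreatest.mp ha⟩

lemma _root_.Finset.image_toNat_eq_iff {α : Type*} [DecidableEq α] {C : Finset α} {ρ : α → ℤ}
    (hinj : Set.InjOn ρ C) (hpos : ∀ x ∈ C, 0 ≤ ρ x) {S : Finset ℕ} :
    C.image (fun x => (ρ x).toNat) = S ↔ C.card = S.card ∧ C.image ρ = S.image (↑) := by
  have himg : C.image ρ = (C.image fun x => (ρ x).toNat).image (↑) := by
    rw [image_image]
    exact image_congr fun x hx => by simp [hpos x hx]
  constructor
  · rintro rfl
    refine ⟨(card_image_of_injOn fun x hx y hy h => hinj hx hy ?_).symm, himg⟩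
    have := hpos x hx
    have := hpos y hy
    omega
  · rintro ⟨-, h⟩
    exact image_injective Nat.cast_injective (himg ▸ h)

lemma _root_.Finset.isChain_insert_union {α : Type*} [PartialOrder α] [DecidableEq α]
    {A B : Finset α} {y : α} (hA : IsChain (· ≤ ·) (A : Set α))
    (hB : IsChain (· ≤ ·) (B : Set α)) (hAy : ∀ x ∈ A, x < y) (hBy : ∀ z ∈ B, y < z) :
    IsChain (· ≤ ·) (↑(insert y (A ∪ B)) : Set α) := by
  rw [coe_insert, coe_union]
  refine IsChain.insert ?_ fun z hz _ =>
    hz.elim (fun hz => Or.inr (hAy z hz).le) fun hz => Or.inl (hBy z hz).le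
  intro u hu v hv hne
  rcases hu with hu | hu <;> rcases hv with hv | hv
  · exact hA hu hv hne
  · exact Or.inl ((hAy u hu).trans (hBy v hv)).le
  · exact Or.inr ((hAy v hv).trans (hBy u hu)).le
  · exact hB hu hv hne

lemma IsRankFunction.strictMono {α : Type*} [PartialOrder α] [IsStronglyAtomic α]
    [WellFoundedGT α] {ρ : α → ℤ} (hρ : IsRankFunction ρ) : StrictMono ρ := by
  intro x y hxy
  induction x using WellFoundedGT.induction with
  | _ x ih =>
    obtain ⟨z, hxz, hzy⟩ := exists_covBy_le_of_lt hxy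
    have := hρ hxz
    rcases hzy.eq_or_lt with rfl | hzy
    · omega
    · have := ih z hxz.lt hzy
      omega

section RankWord

open Classical in
/-- The word `w_S` of `S = R`, read on the ranks `k + 1, …, k + n`. -/
noncomputable def rankWord (R : Set ℤ) (k : ℤ) (n : ℕ) : ABAlg :=
  ((List.range n).map fun i : ℕ => if k + i + 1 ∈ R then bGen else aGen - bGen).prod

lemma rankWord_congr {R R' : Set ℤ} {k k' : ℤ} {n : ℕ}
    (h : ∀ i : ℕ, i < n → (k + i + 1 ∈ R ↔ k' + i + 1 ∈ R')) :
    rankWord R k n = rankWord R' k' n := by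
  classical
  refine congrArg List.prod (List.map_congr_left fun i hi => ?_)
  exact if_congr (h i (List.mem_range.mp hi)) rfl rfl

lemma rankWord_add (R : Set ℤ) (k : ℤ) (m l : ℕ) :
    rankWord R k (m + l) = rankWord R k m * rankWord R (k + m) l := by
  classical
  simp only [rankWord, List.range_add, List.map_append, List.prod_append, List.map_map]
  congr 3
  ext i
  simp only [Function.comp_apply, Nat.cast_add, add_assoc]

lemma rankWord_one_of_mem {R : Set ℤ} {k : ℤ} (h : k + 1 ∈ R) : rankWord R k 1 = bGen := by
  simp [rankWord, h]

lemma rankWord_one_of_notMem {R : Set ℤ} {k : ℤ} (h : k + 1 ∉ R) :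
    rankWord R k 1 = aGen - bGen := by
  simp [rankWord, h]

lemma rankWord_union {A B : Set ℤ} {k : ℤ} {m : ℕ} (l : ℕ) (hA : ∀ r ∈ A, r ≤ k + m)
    (hB : ∀ r ∈ B, k + m < r) :
    rankWord (A ∪ B) k (m + l) = rankWord A k m * rankWord B (k + m) l := by
  rw [rankWord_add]
  congr 1
  · exact rankWord_congr fun i hi =>
      ⟨fun h => h.resolve_right fun h => by have := hB _ h; omega, Or.inl⟩
  · exact rankWord_congr fun i _ =>
      ⟨fun h => h.resolve_left fun h => by have := hA _ h; omega, Or.inr⟩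

lemma wordOf_eq_rankWord (S : Finset ℕ) (n : ℕ) :
    wordOf S n = rankWord ((↑) '' (S : Set ℕ)) 0 n := by
  classical
  refine congrArg List.prod (List.map_congr_left fun i _ => if_congr ?_ rfl rfl)
  simp only [Set.mem_image, mem_coe]
  refine ⟨fun h => ⟨_, h, by push_cast; ring⟩, fun ⟨j, hj, hji⟩ => ?_⟩
  rwa [show i + 1 = j by omega]

lemma wordOf_succ_of_mem {S : Finset ℕ} {m : ℕ} (h : m + 1 ∈ S) :
    wordOf S (m + 1) = wordOf (S.erase (m + 1)) m * bGen := by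
  rw [wordOf_eq_rankWord, wordOf_eq_rankWord, rankWord_add,
    rankWord_one_of_mem (R := (↑) '' (S : Set ℕ)) ⟨m + 1, h, by push_cast; ring⟩]
  congr 1
  refine rankWord_congr fun i hi => ?_
  simp only [coe_erase, Set.mem_image, Set.mem_sdiff, mem_coe, Set.mem_singleton_iff]
  exact exists_congr fun j => ⟨fun h => ⟨⟨h.1, by omega⟩, h.2⟩, fun h => ⟨h.1.1, h.2⟩⟩

lemma localAbPsi_succ {α : Type*} [PartialOrder α] (P Q : Set α) (ρ : α → ℤ) (m : ℕ) :
    localAbPsi P Q ρ (m + 1) = abPsi P ρ (m + 1) - abPsi Q ρ m * aGen := by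
  have hsemi : ∑ᶠ (S : Finset ℕ) (_ : S ⊆ Icc 1 (m + 1) ∧ m + 1 ∈ S),
      (flagCount Q ρ (S.erase (m + 1)) : ABAlg) * wordOf S (m + 1) = abPsi Q ρ m * bGen := by
    rw [finsum_cond_eq_sum_of_cond_iff (t := {S ∈ (Icc 1 (m + 1)).powerset | m + 1 ∈ S}) _
      fun _ => by rw [mem_filter, mem_powerset], abPsi,
      finsum_cond_eq_sum_of_cond_iff _ fun _ => mem_powerset.symm, sum_mul]
    refine sum_nbij' (·.erase (m + 1)) (insert (m + 1)) ?_ ?_ ?_ ?_ ?_ <;>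
      intro S hS <;> simp only [mem_filter, mem_powerset] at hS ⊢
    · intro i hi
      have := hS.1 (mem_of_mem_erase hi)
      simp only [mem_Icc] at this ⊢
      have := ne_of_mem_erase hi
      omega
    · refine ⟨insert_subset (by simp) (hS.trans ?_), mem_insert_self _ _⟩
      exact Icc_subset_Icc_right (Nat.le_succ m)
    · exact insert_erase hS.2
    · exact erase_insert fun h => by have := mem_Icc.1 (hS h); omega
    · rw [wordOf_succ_of_mem hS.2, mul_assoc]
  rw [localAbPsi, abPsiSemi, hsemi, add_tsub_cancel_right]
  noncomm_ring

end RankWord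

section Chains

variable {α : Type*} [PartialOrder α] [Fintype α]

open Classical in
noncomputable def chainsIn (P : Set α) : Finset (Finset α) :=
  {C | ↑C ⊆ P ∧ IsChain (· ≤ ·) (C : Set α)}

@[simp] lemma mem_chainsIn {P : Set α} {C : Finset α} :
    C ∈ chainsIn P ↔ ↑C ⊆ P ∧ IsChain (· ≤ ·) (C : Set α) := by
  classical
  simp [chainsIn]

lemma chainsIn_empty : chainsIn (∅ : Set α) = {∅} := by
  ext C
  simp only [mem_chainsIn, Set.subset_empty_iff, coe_eq_empty, mem_singleton]
  exact ⟨And.left, fun h => ⟨h, by simp [h]⟩⟩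

noncomputable def chainWord (ρ : α → ℤ) (n : ℕ) (C : Finset α) : ABAlg :=
  rankWord (ρ '' C) 0 n

noncomputable def pairSum {M : Type*} [AddCommMonoid M] [DecidableEq α] (A B : Set α)
    (f : Finset α → M) : M :=
  ∑ C ∈ chainsIn A, ∑ D ∈ chainsIn B, f (C ∪ D)

lemma pairSum_add {M : Type*} [AddCommMonoid M] [DecidableEq α] (A B : Set α)
    (f g : Finset α → M) : pairSum A B (fun E => f E + g E) = pairSum A B f + pairSum A B g := by
  simp only [pairSum, sum_add_distrib]

variable {ρ : α → ℤ}

lemma flagCount_eq_card (P : Set α) (S : Finset ℕ) :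
    flagCount P ρ S = #{C ∈ chainsIn P | C.card = S.card ∧ C.image ρ = S.image (↑)} := by
  classical
  rw [flagCount, Nat.card_eq_fintype_card, Fintype.card_subtype]
  congr 1
  ext C
  simp [and_assoc]

lemma abPsi_eq_sum_chainWord {P : Set α} {n : ℕ} (hρ : StrictMonoOn ρ P)
    (hP : ∀ x ∈ P, 1 ≤ ρ x ∧ ρ x ≤ n) :
    abPsi P ρ n = ∑ C ∈ chainsIn P, chainWord ρ n C := by
  classical
  have hmaps : ∀ C ∈ chainsIn P, C.image (fun x => (ρ x).toNat) ∈ (Icc 1 n).powerset := by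
    intro C hC
    simp only [mem_powerset, subset_iff, mem_image, mem_Icc]
    rintro _ ⟨x, hx, rfl⟩
    have := hP x ((mem_chainsIn.1 hC).1 hx)
    omega
  -- Group the chains by their set of ranks `S`: the fibre over `S` has `f_S` elements, each of
  -- word `w_S`.
  rw [abPsi, finsum_cond_eq_sum_of_cond_iff _ fun _ => mem_powerset.symm,
    ← sum_fiberwise_of_maps_to hmaps]
  refine sum_congr rfl fun S _ => ?_
  rw [flagCount_eq_card, ← nsmul_eq_mul, ← sum_const]
  have hfiber : ∀ C ∈ chainsIn P, C.image (fun x => (ρ x).toNat) = S ↔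
      C.card = S.card ∧ C.image ρ = S.image (↑) := by
    intro C hC
    obtain ⟨hCP, hch⟩ := mem_chainsIn.1 hC
    exact image_toNat_eq_iff (hch.injOn_of_strictMonoOn hρ hCP) fun x hx => by
      have := hP x (hCP hx)
      omega
  refine sum_congr (filter_congr fun C hC => (hfiber C hC).symm) fun C hC => ?_
  obtain ⟨hC, hCS⟩ := mem_filter.1 hC
  rw [chainWord, wordOf_eq_rankWord, ← coe_image, ← ((hfiber C hC).1 hCS).2, coe_image]

lemma abPsi_sub_eq_sum_rankWord {P : Set α} {k : ℤ} {n : ℕ}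
    (hρ : StrictMonoOn ρ P) (hP : ∀ x ∈ P, k + 1 ≤ ρ x ∧ ρ x ≤ k + n) :
    abPsi P (fun z => ρ z - k) n = ∑ C ∈ chainsIn P, rankWord (ρ '' C) k n := by
  rw [abPsi_eq_sum_chainWord (fun x hx y hy h => by simpa using hρ hx hy h)
    fun x hx => by have := hP x hx; omega]
  refine sum_congr rfl fun C _ => rankWord_congr fun i _ => ?_
  simp only [Set.mem_image]
  exact exists_congr fun x => and_congr_right fun _ => by omega

lemma abPsi_succ_of_rank_le {P : Set α} {m : ℕ} (hρ : StrictMonoOn ρ P)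
    (hP : ∀ x ∈ P, 1 ≤ ρ x ∧ ρ x ≤ m) :
    abPsi P ρ (m + 1) = abPsi P ρ m * (aGen - bGen) := by
  rw [abPsi_eq_sum_chainWord hρ fun x hx => by have := hP x hx; omega,
    abPsi_eq_sum_chainWord hρ hP, sum_mul]
  refine sum_congr rfl fun C hC => ?_
  rw [chainWord, chainWord, rankWord_add, rankWord_one_of_notMem]
  rintro ⟨x, hx, hxm⟩
  have := hP x ((mem_chainsIn.1 hC).1 hx)
  omega

lemma abPsi_mul_rankWord_mul_abPsi {A B : Set α} {T : Set ℤ} {k : ℤ} {m l : ℕ}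
    (hA : StrictMonoOn ρ A) (hB : StrictMonoOn ρ B) (hAr : ∀ x ∈ A, 1 ≤ ρ x ∧ ρ x ≤ m)
    (hk : k = m + 1) (hBr : ∀ x ∈ B, k + 1 ≤ ρ x ∧ ρ x ≤ k + l) (hT : T ⊆ {k}) :
    abPsi A ρ m * rankWord T m 1 * abPsi B (fun z => ρ z - k) l =
      ∑ C ∈ chainsIn A, ∑ D ∈ chainsIn B, rankWord (ρ '' C ∪ T ∪ ρ '' D) 0 (m + 1 + l) := by
  rw [abPsi_eq_sum_chainWord hA hAr, abPsi_sub_eq_sum_rankWord hB hBr, sum_mul, sum_mul_sum]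
  refine sum_congr rfl fun C hC => sum_congr rfl fun D hD => ?_
  have hCr : ∀ r ∈ ρ '' C, r ≤ 0 + m := by
    rintro _ ⟨x, hx, rfl⟩
    have := hAr x ((mem_chainsIn.1 hC).1 hx)
    omega
  have hTr : ∀ r ∈ T, r = m + 1 := fun r hr => (hT hr).trans hk
  have hDr : ∀ r ∈ ρ '' D, 0 + ((m + 1 : ℕ) : ℤ) < r := by
    rintro _ ⟨x, hx, rfl⟩
    have := hBr x ((mem_chainsIn.1 hD).1 hx)
    omega
  rw [rankWord_union l (fun r hr => hr.elim (fun hr => by have := hCr r hr; omega)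
      fun hr => by have := hTr r hr; omega) hDr,
    rankWord_union 1 hCr fun r hr => by have := hTr r hr; omega]
  congr 1 <;> simp [chainWord, hk]

variable [DecidableEq α]

lemma abPsi_mul_sub_mul_abPsi {A B : Set α} {k : ℤ} {m l : ℕ}
    (hA : StrictMonoOn ρ A) (hB : StrictMonoOn ρ B) (hAr : ∀ x ∈ A, 1 ≤ ρ x ∧ ρ x ≤ m)
    (hk : k = m + 1) (hBr : ∀ x ∈ B, k + 1 ≤ ρ x ∧ ρ x ≤ k + l) :
    abPsi A ρ m * (aGen - bGen) * abPsi B (fun z => ρ z - k) l =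
      pairSum A B (chainWord ρ (m + 1 + l)) := by
  rw [← rankWord_one_of_notMem (Set.notMem_empty ((m : ℤ) + 1)),
    abPsi_mul_rankWord_mul_abPsi hA hB hAr hk hBr (Set.empty_subset _)]
  simp [pairSum, chainWord, Set.image_union]

lemma abPsi_mul_b_mul_abPsi {A B : Set α} {k : ℤ} {m l : ℕ} {y : α}
    (hA : StrictMonoOn ρ A) (hB : StrictMonoOn ρ B) (hAr : ∀ x ∈ A, 1 ≤ ρ x ∧ ρ x ≤ m)
    (hk : k = m + 1) (hy : ρ y = k) (hBr : ∀ x ∈ B, k + 1 ≤ ρ x ∧ ρ x ≤ k + l) :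
    abPsi A ρ m * bGen * abPsi B (fun z => ρ z - k) l =
      pairSum A B (fun E => chainWord ρ (m + 1 + l) (insert y E)) := by
  rw [← rankWord_one_of_mem (Set.mem_singleton ((m : ℤ) + 1)),
    abPsi_mul_rankWord_mul_abPsi hA hB hAr hk hBr (by rw [hk])]
  refine sum_congr rfl fun C _ => sum_congr rfl fun D _ => ?_
  dsimp only
  rw [chainWord, coe_insert, coe_union, Set.image_insert_eq,
    Set.image_union, hy, hk]
  congr 1
  ext r
  simp only [Set.mem_union, Set.mem_insert_iff, Set.mem_singleton_iff]
  tauto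

end Chains

section Decomposition

open scoped Classical

variable {α : Type*} [PartialOrder α] [DecidableEq α]

lemma insert_filter_lt_union_filter_gt {C : Finset α} (hC : IsChain (· ≤ ·) (C : Set α))
    {y : α} (hy : y ∈ C) : insert y ({x ∈ C | x < y} ∪ {z ∈ C | y < z}) = C := by
  ext x
  simp only [mem_insert, mem_union, mem_filter]
  refine ⟨by rintro (rfl | h | h) <;> simp_all, fun hx => ?_⟩
  rcases eq_or_ne x y with rfl | hne
  · exact Or.inl rfl
  · exact Or.inr ((hC hx hy hne).imp (fun h => ⟨hx, h.lt_of_ne hne⟩)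
      fun h => ⟨hx, h.lt_of_ne hne.symm⟩)

lemma filter_lt_insert_union {A B : Finset α} {y : α} (hA : ∀ x ∈ A, x < y)
    (hB : ∀ z ∈ B, y < z) : {x ∈ insert y (A ∪ B) | x < y} = A := by
  ext x
  simp only [mem_filter, mem_insert, mem_union]
  refine ⟨?_, fun hx => ⟨Or.inr (Or.inl hx), hA x hx⟩⟩
  rintro ⟨rfl | hx | hx, hxy⟩
  exacts [(lt_irrefl x hxy).elim, hx, ((hB x hx).trans hxy).false.elim]

lemma filter_gt_insert_union {A B : Finset α} {y : α} (hA : ∀ x ∈ A, x < y)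
    (hB : ∀ z ∈ B, y < z) : {z ∈ insert y (A ∪ B) | y < z} = B := by
  ext z
  simp only [mem_filter, mem_insert, mem_union]
  refine ⟨?_, fun hz => ⟨Or.inr (Or.inr hz), hB z hz⟩⟩
  rintro ⟨rfl | hz | hz, hyz⟩
  exacts [(lt_irrefl z hyz).elim, ((hA z hz).trans hyz).false.elim, hz]

variable {M : Type*} [Fintype α] [AddCommMonoid M]

lemma sum_chainsIn_filter_isLeast {P : Set α} (S : Set α) {y : α} (hy : y ∈ P)
    (f : Finset α → M) :
    ∑ C ∈ chainsIn P with y ∈ C ∧ ∀ x ∈ C, x ∈ S → y ≤ x, f C =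
      pairSum {x | x ∈ P ∧ x < y ∧ x ∉ S} {z | z ∈ P ∧ y < z} (fun E => f (insert y E)) := by
  rw [pairSum, ← sum_product']
  refine sum_nbij' (fun C => ({x ∈ C | x < y}, {z ∈ C | y < z}))
    (fun p => insert y (p.1 ∪ p.2)) ?_ ?_ ?_ ?_ ?_
  · intro C hC
    obtain ⟨hC, -, hleast⟩ := mem_filter.1 hC
    obtain ⟨hCP, hch⟩ := mem_chainsIn.1 hC
    simp only [coe_filter, mem_product, mem_chainsIn]
    refine ⟨⟨fun x hx => ⟨hCP hx.1, hx.2, fun hxS => (hleast x hx.1 hxS).not_gt hx.2⟩,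
      hch.mono fun x hx => hx.1⟩, fun z hz => ⟨hCP hz.1, hz.2⟩, hch.mono fun z hz => hz.1⟩
  · rintro ⟨A, B⟩ hAB
    simp only [mem_product, mem_chainsIn, Set.subset_def, mem_coe, Set.mem_ofPred_eq] at hAB
    obtain ⟨⟨hA, hAch⟩, hB, hBch⟩ := hAB
    simp only [mem_filter, mem_chainsIn, mem_insert_self, true_and]
    refine ⟨⟨fun x hx => ?_, isChain_insert_union hAch hBch (fun x hx => (hA x hx).2.1)
      fun z hz => (hB z hz).2⟩, fun x hx hxS => ?_⟩
    · simp only [coe_insert, coe_union, Set.mem_insert_iff, Set.mem_union, mem_coe] at hx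
      rcases hx with rfl | hx | hx
      exacts [hy, (hA x hx).1, (hB x hx).1]
    · simp only [mem_insert, mem_union] at hx
      rcases hx with rfl | hx | hx
      exacts [le_rfl, ((hA x hx).2.2 hxS).elim, (hB x hx).2.le]
  · intro C hC
    exact insert_filter_lt_union_filter_gt (mem_chainsIn.1 (mem_filter.1 hC).1).2
      (mem_filter.1 hC).2.1
  · rintro ⟨A, B⟩ hAB
    simp only [mem_product, mem_chainsIn, Set.subset_def, mem_coe, Set.mem_ofPred_eq] at hAB
    exact Prod.ext (filter_lt_insert_union (fun x hx => (hAB.1.1 x hx).2.1) fun z hz =>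
      (hAB.2.1 z hz).2) (filter_gt_insert_union (fun x hx => (hAB.1.1 x hx).2.1) fun z hz =>
      (hAB.2.1 z hz).2)
  · intro C hC
    rw [insert_filter_lt_union_filter_gt (mem_chainsIn.1 (mem_filter.1 hC).1).2
      (mem_filter.1 hC).2.1]

lemma sum_chainsIn_meet (P S : Set α) (f : Finset α → M) :
    ∑ C ∈ chainsIn P with ∃ x ∈ C, x ∈ S, f C =
      ∑ y with y ∈ P ∧ y ∈ S,
        pairSum {x | x ∈ P ∧ x < y ∧ x ∉ S} {z | z ∈ P ∧ y < z} (fun E => f (insert y E)) := by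
  -- Index each chain by the least of its elements lying in `S`.
  calc _ = ∑ C ∈ chainsIn P with ∃ x ∈ C, x ∈ S,
        ∑ y ∈ C with y ∈ S ∧ ∀ x ∈ C, x ∈ S → y ≤ x, f C := by
        refine sum_congr rfl fun C hC => ?_
        obtain ⟨hC, x, hxC, hxS⟩ := mem_filter.1 hC
        obtain ⟨y, ⟨hyC, hyS⟩, hy⟩ :=
          ((mem_chainsIn.1 hC).2.mono Set.inter_subset_left).exists_isLeast ⟨x, hxC, hxS⟩
        rw [sum_const, card_eq_one.2 ⟨y, ?_⟩, one_smul]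
        ext z
        simp only [mem_filter, mem_singleton]
        refine ⟨fun ⟨hzC, hzS, hz⟩ => le_antisymm (hz y hyC hyS) (hy ⟨hzC, hzS⟩), ?_⟩
        rintro rfl
        exact ⟨hyC, hyS, fun x hx hxS => hy ⟨hx, hxS⟩⟩
    _ = ∑ y with y ∈ P ∧ y ∈ S, ∑ C ∈ chainsIn P with y ∈ C ∧ ∀ x ∈ C, x ∈ S → y ≤ x, f C := by
        refine sum_comm' fun C y => ?_
        simp only [mem_filter, mem_univ, true_and, mem_chainsIn]
        exact ⟨fun ⟨⟨hC, _⟩, hyC, hyS, hy⟩ => ⟨⟨hC, hyC, hy⟩, hC.1 hyC, hyS⟩,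
          fun ⟨⟨hC, hyC, hy⟩, _, hyS⟩ => ⟨⟨hC, y, hyC, hyS⟩, hyC, hyS, hy⟩⟩
    _ = _ := sum_congr rfl fun y hy => sum_chainsIn_filter_isLeast S (mem_filter.1 hy).2.1 f

lemma sum_chainsIn_eq_add_sum_insert (P : Set α) (f : Finset α → M) :
    ∑ C ∈ chainsIn P, f C =
      f ∅ + ∑ y with y ∈ P, ∑ D ∈ chainsIn {z | z ∈ P ∧ y < z}, f (insert y D) := by
  rw [← sum_filter_not_add_sum_filter (chainsIn P) fun C => ∃ x ∈ C, x ∈ P,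
    sum_chainsIn_meet]
  congr 1
  · convert sum_singleton f ∅
    ext C
    simp only [mem_filter, mem_chainsIn, mem_singleton, not_exists, not_and]
    refine ⟨fun ⟨⟨hCP, _⟩, h⟩ => eq_empty_of_forall_notMem fun x hx => h x hx (hCP hx), ?_⟩
    rintro rfl
    simp
  · refine sum_congr (by simp) fun y _ => ?_
    simp [pairSum, chainsIn_empty]

lemma sum_filter_le_lt {a t : α} (h : a < t) (g : α → M) :
    ∑ y with a ≤ y ∧ y < t, g y = g a + ∑ y with a < y ∧ y < t, g y := by
  rw [← sum_insert (by simp)]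
  congr 1
  ext y
  simp only [mem_filter, mem_univ, true_and, mem_insert]
  constructor
  · rintro ⟨hay, hyt⟩
    exact hay.eq_or_lt.imp Eq.symm fun hay => ⟨hay, hyt⟩
  · rintro (rfl | ⟨hay, hyt⟩)
    exacts [⟨le_rfl, h⟩, ⟨hay.le, hyt⟩]

lemma sum_Ico_sum_chainsIn_Ioo {y₀ t : α} (h : y₀ < t) (F : Finset α → M) :
    ∑ y with y₀ ≤ y ∧ y < t, ∑ D ∈ chainsIn (Set.Ioo y t), F D =
      F ∅ + ∑ y with y₀ < y ∧ y < t, ∑ D ∈ chainsIn (Set.Ioo y t), (F D + F (insert y D)) := by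
  rw [sum_filter_le_lt h, sum_chainsIn_eq_add_sum_insert, add_assoc]
  simp only [sum_add_distrib, Set.mem_Ioo]
  congr 1
  rw [add_comm]
  refine congrArg _ (sum_congr rfl fun y hy => ?_)
  congr 2
  ext z
  simp only [Set.mem_ofPred_eq, Set.mem_Ioo]
  have := (mem_filter.1 hy).2.1
  exact ⟨fun ⟨⟨_, hzt⟩, hyz⟩ => ⟨hyz, hzt⟩, fun ⟨hyz, hzt⟩ => ⟨⟨this.trans hyz, hzt⟩, hyz⟩⟩

end Decomposition

section GradedPoset

variable {Γ : Type*} [PartialOrder Γ] {ρ : Γ → ℤ} {b t : Γ}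

lemma one_le_rank (hmono : StrictMono ρ) (hb : ∀ z, b ≤ z) (hρb : ρ b = 0) {x : Γ}
    (hx : x ≠ b) : 1 ≤ ρ x := by
  have := hmono ((hb x).lt_of_ne' hx)
  omega

lemma setOf_le_ne_ne_eq_Ioo (ht : ∀ z, z ≤ t) (y : Γ) :
    {z | y ≤ z ∧ z ≠ y ∧ z ≠ t} = Set.Ioo y t := by
  ext z
  exact ⟨fun ⟨h₁, h₂, h₃⟩ => ⟨h₁.lt_of_ne h₂.symm, (ht z).lt_of_ne h₃⟩,
    fun ⟨h₁, h₂⟩ => ⟨h₁.le, h₁.ne', h₂.ne⟩⟩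

variable [Fintype Γ] [DecidableEq Γ] {n : ℕ}

lemma abPsi_mul_sub_mul_abPsi_Ioo (hmono : StrictMono ρ) (hb : ∀ z, b ≤ z) (ht : ∀ z, z ≤ t)
    (hρb : ρ b = 0) (hn : ρ t = n + 1) {A : Set Γ} {y : Γ} (hA : ∀ x ∈ A, x ≠ b ∧ x < y)
    (hyb : y ≠ b) (hyt : y < t) :
    abPsi A ρ (ρ y - 1).toNat * (aGen - bGen) *
        abPsi {z | y ≤ z ∧ z ≠ y ∧ z ≠ t} (fun z => ρ z - ρ y) (ρ t - ρ y - 1).toNat =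
      pairSum A (Set.Ioo y t) (chainWord ρ n) := by
  have := one_le_rank hmono hb hρb hyb
  have := hmono hyt
  rw [setOf_le_ne_ne_eq_Ioo ht,
    abPsi_mul_sub_mul_abPsi (hmono.strictMonoOn _) (hmono.strictMonoOn _)
      (fun x hx => ⟨one_le_rank hmono hb hρb (hA x hx).1, by have := hmono (hA x hx).2; omega⟩)
      (by omega) fun z hz => ⟨by have := hmono hz.1; omega, by have := hmono hz.2; omega⟩,
    show (ρ y - 1).toNat + 1 + (ρ t - ρ y - 1).toNat = n by omega]

lemma abPsi_mul_b_mul_abPsi_Ioo (hmono : StrictMono ρ) (hb : ∀ z, b ≤ z) (ht : ∀ z, z ≤ t)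
    (hρb : ρ b = 0) (hn : ρ t = n + 1) {A : Set Γ} {y : Γ} (hA : ∀ x ∈ A, x ≠ b ∧ x < y)
    (hyb : y ≠ b) (hyt : y < t) :
    abPsi A ρ (ρ y - 1).toNat * bGen *
        abPsi {z | y ≤ z ∧ z ≠ y ∧ z ≠ t} (fun z => ρ z - ρ y) (ρ t - ρ y - 1).toNat =
      pairSum A (Set.Ioo y t) (fun E => chainWord ρ n (insert y E)) := by
  have := one_le_rank hmono hb hρb hyb
  have := hmono hyt
  rw [setOf_le_ne_ne_eq_Ioo ht,
    abPsi_mul_b_mul_abPsi (hmono.strictMonoOn _) (hmono.strictMonoOn _)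
      (fun x hx => ⟨one_le_rank hmono hb hρb (hA x hx).1, by have := hmono (hA x hx).2; omega⟩)
      (by omega) rfl fun z hz => ⟨by have := hmono hz.1; omega, by have := hmono hz.2; omega⟩,
    show (ρ y - 1).toNat + 1 + (ρ t - ρ y - 1).toNat = n by omega]

lemma abPsi_mul_add_mul_abPsi_Ioo (hmono : StrictMono ρ) (hb : ∀ z, b ≤ z) (ht : ∀ z, z ≤ t)
    (hρb : ρ b = 0) (hn : ρ t = n + 1) {A : Set Γ} {y : Γ} (hA : ∀ x ∈ A, x ≠ b ∧ x < y)
    (hyb : y ≠ b) (hyt : y < t) :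
    abPsi A ρ (ρ y - 1).toNat * (aGen + bGen) *
        abPsi {z | y ≤ z ∧ z ≠ y ∧ z ≠ t} (fun z => ρ z - ρ y) (ρ t - ρ y - 1).toNat =
      pairSum A (Set.Ioo y t) (chainWord ρ n) +
        2 • pairSum A (Set.Ioo y t) (fun E => chainWord ρ n (insert y E)) := by
  rw [← abPsi_mul_sub_mul_abPsi_Ioo hmono hb ht hρb hn hA hyb hyt,
    ← abPsi_mul_b_mul_abPsi_Ioo hmono hb ht hρb hn hA hyb hyt]
  noncomm_ring

end GradedPoset

lemma join_le_iff {Γ : Type*} [Preorder Γ] {q : Γ} {jn : Γ → Γ}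
    (hjn : ∀ z, IsLeast {w | z ≤ w ∧ q ≤ w} (jn z)) {z w : Γ} : jn z ≤ w ↔ z ≤ w ∧ q ≤ w :=
  ⟨fun h => ⟨(hjn z).1.1.trans h, (hjn z).1.2.trans h⟩, fun h => (hjn z).2 h⟩

lemma lt_join {Γ : Type*} [Preorder Γ] {q : Γ} {jn : Γ → Γ}
    (hjn : ∀ z, IsLeast {w | z ≤ w ∧ q ≤ w} (jn z)) {x : Γ} (hqx : ¬ q ≤ x) : x < jn x :=
  (hjn x).1.1.lt_of_not_ge fun h => hqx ((hjn x).1.2.trans h)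

lemma ne_and_lt_of_join_le {Γ : Type*} [PartialOrder Γ] {b q y : Γ} {jn : Γ → Γ}
    (hjn : ∀ z, IsLeast {w | z ≤ w ∧ q ≤ w} (jn z)) (hqy : q ≤ y) {x : Γ}
    (hx : x ∈ {x | ¬ q ≤ x ∧ jn x ≤ y ∧ x ≠ b}) : x ≠ b ∧ x < y :=
  ⟨hx.2.2, ((join_le_iff hjn).1 hx.2.1).1.lt_of_ne fun h => hx.1 (h ▸ hqy)⟩

lemma ne_and_lt_of_join_lt {Γ : Type*} [PartialOrder Γ] {b q y : Γ} {jn : Γ → Γ}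
    (hjn : ∀ z, IsLeast {w | z ≤ w ∧ q ≤ w} (jn z)) {x : Γ}
    (hx : x ∈ {x | ¬ q ≤ x ∧ jn x < y ∧ x ≠ b}) : x ≠ b ∧ x < y :=
  ⟨hx.2.2, (lt_join hjn hx.1).trans hx.2.1⟩

lemma setOf_join_le_self {Γ : Type*} [PartialOrder Γ] {b q : Γ} {jn : Γ → Γ}
    (hjn : ∀ z, IsLeast {w | z ≤ w ∧ q ≤ w} (jn z)) :
    {x | ¬ q ≤ x ∧ jn x ≤ q ∧ x ≠ b} = {z | z ≤ q ∧ z ≠ b ∧ z ≠ q} := by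
  ext z
  simp only [Set.mem_ofPred_eq, join_le_iff hjn, le_refl, and_true]
  exact ⟨fun ⟨hqz, hzq, hzb⟩ => ⟨hzq, hzb, by rintro rfl; exact hqz le_rfl⟩,
    fun ⟨hzq, hzb, hne⟩ => ⟨fun h => hne (le_antisymm hzq h), hzq, hzb⟩⟩

lemma rank_add_two_le_of_join_lt {Γ : Type*} [Preorder Γ] {ρ : Γ → ℤ} {q y : Γ} {jn : Γ → Γ}
    (hmono : StrictMono ρ) (hjn : ∀ z, IsLeast {w | z ≤ w ∧ q ≤ w} (jn z)) {x : Γ}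
    (hqx : ¬ q ≤ x) (hxy : jn x < y) : ρ x + 2 ≤ ρ y := by
  have := hmono (lt_join hjn hqx)
  have := hmono hxy
  omega

lemma exists_join_of_isChain {Γ : Type*} [PartialOrder Γ] [WellFoundedGT Γ] {q : Γ}
    {jn : Γ → Γ} (hjn : ∀ z, IsLeast {w | z ≤ w ∧ q ≤ w} (jn z)) {C : Set Γ}
    (hC : IsChain (· ≤ ·) C) :
    ∃ y₀, (∀ y, y₀ ≤ y ↔ q ≤ y ∧ ∀ x ∈ C, jn x ≤ y) ∧
      ∀ y, y₀ < y ↔ q < y ∧ ∀ x ∈ C, jn x < y := by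
  have hch : IsChain (· ≤ ·) (insert q (jn '' C)) :=
    (hC.image_of_map_rel _ _ jn fun x y hxy =>
      (join_le_iff hjn).2 ⟨hxy.trans (hjn y).1.1, (hjn y).1.2⟩).insert
      fun z ⟨x, _, hz⟩ _ => Or.inl (hz ▸ (hjn x).1.2)
  obtain ⟨y₀, hy₀, hy₀max⟩ := hch.exists_isGreatest (Set.insert_nonempty _ _)
  have hq₀ : q ≤ y₀ := hy₀max (Set.mem_insert _ _)
  have hjn₀ : ∀ x ∈ C, jn x ≤ y₀ := fun x hx => hy₀max (Set.mem_insert_of_mem _ ⟨x, hx, rfl⟩)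
  refine ⟨y₀, fun y => ⟨fun h => ⟨hq₀.trans h, fun x hx => (hjn₀ x hx).trans h⟩, fun h => ?_⟩,
    fun y => ⟨fun h => ⟨hq₀.trans_lt h, fun x hx => (hjn₀ x hx).trans_lt h⟩, fun h => ?_⟩⟩ <;>
  · rcases hy₀ with rfl | ⟨x, hx, rfl⟩
    exacts [h.1, h.2 x hx]

section JoinAdmissible

open scoped Classical

variable {Γ M : Type*} [PartialOrder Γ] [Fintype Γ] [DecidableEq Γ] [AddCommMonoid M]
  {b t q : Γ} {jn : Γ → Γ}

lemma sum_chainsIn_eq_add_sum_pairSum (hb : ∀ z, b ≤ z) (ht : ∀ z, z ≤ t) (hqb : q ≠ b)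
    (hjn : ∀ z, IsLeast {w | z ≤ w ∧ q ≤ w} (jn z)) (f : Finset Γ → M) :
    ∑ C ∈ chainsIn {z | z ≠ b ∧ z ≠ t}, f C =
      ∑ C ∈ chainsIn {x | ¬ q ≤ x ∧ x ≠ b}, f C +
      ∑ y with q ≤ y ∧ y < t,
        pairSum {x | ¬ q ≤ x ∧ jn x ≤ y ∧ x ≠ b} (Set.Ioo y t) (fun E => f (insert y E)) := by
  rw [← sum_filter_not_add_sum_filter _ fun C => ∃ x ∈ C, x ∈ {z | q ≤ z}, sum_chainsIn_meet]
  congr 1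
  · refine sum_congr ?_ fun _ _ => rfl
    ext C
    simp only [mem_filter, mem_chainsIn, Set.subset_def, mem_coe, Set.mem_ofPred_eq, not_exists,
      not_and]
    exact ⟨fun ⟨⟨hC, hch⟩, hq⟩ => ⟨fun x hx => ⟨hq x hx, (hC x hx).1⟩, hch⟩,
      fun ⟨hC, hch⟩ => ⟨⟨fun x hx => ⟨(hC x hx).2, by rintro rfl; exact (hC _ hx).1 (ht q)⟩,
        hch⟩, fun x hx => (hC x hx).1⟩⟩
  · refine sum_congr ?_ fun y hy => ?_
    · ext y
      simp only [mem_filter, mem_univ, true_and, Set.mem_ofPred_eq, lt_iff_le_and_ne]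
      exact ⟨fun ⟨⟨_, hyt⟩, hqy⟩ => ⟨hqy, ht y, hyt⟩,
        fun ⟨hqy, _, hyt⟩ => ⟨⟨by rintro rfl; exact hqb (le_antisymm hqy (hb q)), hyt⟩, hqy⟩⟩
    have hqy := (mem_filter.1 hy).2.1
    have hyt := (mem_filter.1 hy).2.2
    congr 1 <;> ext x <;> simp only [Set.mem_ofPred_eq, Set.mem_Ioo, join_le_iff hjn]
    · refine ⟨fun ⟨⟨hxb, _⟩, hxy, hqx⟩ => ⟨hqx, ⟨hxy.le, hqy⟩, hxb⟩,
        fun ⟨hqx, ⟨hxy, _⟩, hxb⟩ => ⟨⟨hxb, ?_⟩, hxy.lt_of_ne ?_, hqx⟩⟩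
      · rintro rfl; exact hqx (ht q)
      · rintro rfl; exact hqx hqy
    · exact ⟨fun ⟨⟨_, hxt⟩, hyx⟩ => ⟨hyx, (ht x).lt_of_ne hxt⟩,
        fun ⟨hyx, hxt⟩ => ⟨⟨((hb y).trans_lt hyx).ne', hxt.ne⟩, hyx⟩⟩

lemma sum_pairSum_join_le (ht : ∀ z, z ≤ t) (hqt : q ≠ t)
    (hjn : ∀ z, IsLeast {w | z ≤ w ∧ q ≤ w} (jn z)) (f : Finset Γ → M) :
    ∑ y with q ≤ y ∧ y < t, pairSum {x | ¬ q ≤ x ∧ jn x ≤ y ∧ x ≠ b} (Set.Ioo y t) f =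
      ∑ C ∈ chainsIn {x | ¬ q ≤ x ∧ jn x < t ∧ x ≠ b}, f C +
      ∑ y with q < y ∧ y < t, pairSum {x | ¬ q ≤ x ∧ jn x < y ∧ x ≠ b} (Set.Ioo y t)
        (fun E => f E + f (insert y E)) := by
  -- Sum over the chain `C` first: the admissible `y` are those above the join of `C` and `q`.
  simp only [pairSum]
  rw [sum_comm' (t' := chainsIn {x | ¬ q ≤ x ∧ jn x < t ∧ x ≠ b})
      (s' := fun C => {y | q ≤ y ∧ y < t ∧ ∀ x ∈ C, jn x ≤ y}) ?_,
    sum_comm' (t' := chainsIn {x | ¬ q ≤ x ∧ jn x < t ∧ x ≠ b})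
      (s' := fun C => {y | q < y ∧ y < t ∧ ∀ x ∈ C, jn x < y}) ?_, ← sum_add_distrib]
  · refine sum_congr rfl fun C hC => ?_
    obtain ⟨hCX, hCch⟩ := mem_chainsIn.1 hC
    obtain ⟨y₀, hle, hlt⟩ := exists_join_of_isChain hjn hCch
    have hy₀t : y₀ < t := (hlt t).2 ⟨(ht q).lt_of_ne hqt, fun x hx => (hCX hx).2.1⟩
    rw [filter_congr fun y _ => show _ ↔ y₀ ≤ y ∧ y < t by rw [hle]; tauto,
      filter_congr (p := fun y => q < y ∧ y < t ∧ ∀ x ∈ C, jn x < y)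
        fun y _ => show _ ↔ y₀ < y ∧ y < t by rw [hlt]; tauto]
    refine (sum_Ico_sum_chainsIn_Ioo hy₀t fun D => f (C ∪ D)).trans ?_
    simp only [union_empty, union_insert]
  all_goals
    intro y C
    simp only [mem_filter, mem_univ, true_and, mem_chainsIn, Set.subset_def, mem_coe,
      Set.mem_ofPred_eq]
    constructor
    · rintro ⟨⟨hqy, hyt⟩, hC, hch⟩
      exact ⟨⟨hqy, hyt, fun x hx => (hC x hx).2.1⟩,
        fun x hx => ⟨(hC x hx).1, by have := (hC x hx).2.1; order, (hC x hx).2.2⟩, hch⟩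
    · rintro ⟨⟨hqy, hyt, hjy⟩, hC, hch⟩
      exact ⟨⟨hqy, hyt⟩, fun x hx => ⟨(hC x hx).1, hjy x hx, (hC x hx).2.2⟩, hch⟩

lemma localAbPsi_mul_abPsi_Ioo {ρ : Γ → ℤ} {n : ℕ} (hmono : StrictMono ρ) (hb : ∀ z, b ≤ z)
    (ht : ∀ z, z ≤ t) (hρb : ρ b = 0) (hn : ρ t = n + 1) (hqb : q ≠ b)
    (hjn : ∀ z, IsLeast {w | z ≤ w ∧ q ≤ w} (jn z)) {y : Γ} (hqy : q < y) (hyt : y < t) :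
    (localAbPsi {x | ¬ q ≤ x ∧ jn x ≤ y ∧ x ≠ b} {x | ¬ q ≤ x ∧ jn x < y ∧ x ≠ b} ρ
          (ρ y - 1).toNat * (aGen + bGen) +
        abPsi {x | ¬ q ≤ x ∧ jn x < y ∧ x ≠ b} ρ (ρ y - 2).toNat *
          (aGen * bGen + bGen * aGen)) *
      abPsi {z | y ≤ z ∧ z ≠ y ∧ z ≠ t} (fun z => ρ z - ρ y) (ρ t - ρ y - 1).toNat =
    pairSum {x | ¬ q ≤ x ∧ jn x ≤ y ∧ x ≠ b} (Set.Ioo y t) (chainWord ρ n) +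
        2 • pairSum {x | ¬ q ≤ x ∧ jn x ≤ y ∧ x ≠ b} (Set.Ioo y t)
          (fun E => chainWord ρ n (insert y E)) -
      pairSum {x | ¬ q ≤ x ∧ jn x < y ∧ x ≠ b} (Set.Ioo y t)
        (fun E => chainWord ρ n E + chainWord ρ n (insert y E)) := by
  have hyb : y ≠ b := ((hb q).trans_lt hqy).ne'
  have hρy : 2 ≤ ρ y := by have := one_le_rank hmono hb hρb hqb; have := hmono hqy; omega
  have hle := fun x => ne_and_lt_of_join_le (b := b) (x := x) hjn hqy.le
  have hlt := fun x => ne_and_lt_of_join_lt (b := b) (y := y) (x := x) hjn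
  have hpad : abPsi {x | ¬ q ≤ x ∧ jn x < y ∧ x ≠ b} ρ (ρ y - 1).toNat =
      abPsi {x | ¬ q ≤ x ∧ jn x < y ∧ x ≠ b} ρ (ρ y - 2).toNat * (aGen - bGen) := by
    rw [show (ρ y - 1).toNat = (ρ y - 2).toNat + 1 by omega]
    refine abPsi_succ_of_rank_le (hmono.strictMonoOn _) fun x ⟨hqx, hxy, hxb⟩ =>
      ⟨one_le_rank hmono hb hρb hxb, ?_⟩
    have := rank_add_two_le_of_join_lt hmono hjn hqx hxy
    omega
  have hloc : localAbPsi {x | ¬ q ≤ x ∧ jn x ≤ y ∧ x ≠ b} {x | ¬ q ≤ x ∧ jn x < y ∧ x ≠ b} ρ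
      (ρ y - 1).toNat = abPsi {x | ¬ q ≤ x ∧ jn x ≤ y ∧ x ≠ b} ρ (ρ y - 1).toNat -
        abPsi {x | ¬ q ≤ x ∧ jn x < y ∧ x ≠ b} ρ (ρ y - 2).toNat * aGen := by
    rw [show (ρ y - 1).toNat = (ρ y - 2).toNat + 1 by omega, localAbPsi_succ]
  -- `(P - Q a)(a + b) + Q(ab + ba) = P(a + b) - Q(a - b)(a - b) - Q(a - b)b`, and `Q(a - b)` is
  -- `Ψ(X_{<y})` read one rank higher.
  rw [hloc, pairSum_add, ← abPsi_mul_add_mul_abPsi_Ioo hmono hb ht hρb hn hle hyb hyt,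
    ← abPsi_mul_sub_mul_abPsi_Ioo hmono hb ht hρb hn hlt hyb hyt,
    ← abPsi_mul_b_mul_abPsi_Ioo hmono hb ht hρb hn hlt hyb hyt, hpad]
  noncomm_ring

end JoinAdmissible

theorem abPsi_formula_general {Γ : Type*} [PartialOrder Γ] [Finite Γ]
    (ρ : Γ → ℤ) (b t : Γ) (hb : ∀ z : Γ, b ≤ z) (ht : ∀ z : Γ, z ≤ t)
    (hEul : Eulerian ρ) (hρb : ρ b = 0)
    (N : ℕ) (hN : ρ t = (N : ℤ))
    (q : Γ) (hqb : q ≠ b) (hqt : q ≠ t)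
    (jn : Γ → Γ) (hjn : ∀ z : Γ, IsLeast {w : Γ | z ≤ w ∧ q ≤ w} (jn z)) :
    abPsi {z : Γ | z ≠ b ∧ z ≠ t} ρ (N - 1) =
      localAbPsi {x : Γ | ¬ q ≤ x ∧ x ≠ b} {x : Γ | ¬ q ≤ x ∧ jn x < t ∧ x ≠ b} ρ (N - 1)
      + (1 / 2 : ℚ) • (
          abPsi {x : Γ | ¬ q ≤ x ∧ jn x < t ∧ x ≠ b} ρ (N - 2) * (aGen + bGen)
          + abPsi {z : Γ | z ≤ q ∧ z ≠ b ∧ z ≠ q} ρ ((ρ q - 1).toNat)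
              * (aGen + bGen)
              * abPsi {z : Γ | q ≤ z ∧ z ≠ q ∧ z ≠ t} (fun z => ρ z - ρ q)
                  ((ρ t - ρ q - 1).toNat)
          + ∑ᶠ (y : Γ) (_ : q < y ∧ y < t),
              ( localAbPsi {x : Γ | ¬ q ≤ x ∧ jn x ≤ y ∧ x ≠ b}
                    {x : Γ | ¬ q ≤ x ∧ jn x < y ∧ x ≠ b} ρ ((ρ y - 1).toNat)
                  * (aGen + bGen)
                + abPsi {x : Γ | ¬ q ≤ x ∧ jn x < y ∧ x ≠ b} ρ ((ρ y - 2).toNat)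
                    * (aGen * bGen + bGen * aGen) )
              * abPsi {z : Γ | y ≤ z ∧ z ≠ y ∧ z ≠ t} (fun z => ρ z - ρ y)
                  ((ρ t - ρ y - 1).toNat) ) := by
  classical
  cases nonempty_fintype Γ
  have hmono : StrictMono ρ := hEul.1.1.strictMono
  have hqt' : q < t := (ht q).lt_of_ne hqt
  have hrank : ∀ x, x ≠ b → x ≠ t → 1 ≤ ρ x ∧ ρ x < ρ t := fun x hxb hxt =>
    ⟨one_le_rank hmono hb hρb hxb, hmono ((ht x).lt_of_ne hxt)⟩
  obtain ⟨n, rfl⟩ : ∃ n, N = n + 2 :=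
    ⟨N - 2, by have := hrank q hqb hqt; have := hmono hqt'; omega⟩
  have hn : ρ t = ((n + 1 : ℕ) : ℤ) + 1 := by push_cast; omega
  have hΓ : ∀ x ∈ {z | z ≠ b ∧ z ≠ t}, 1 ≤ ρ x ∧ ρ x ≤ ((n + 1 : ℕ) : ℤ) := fun x hx => by
    have := hrank x hx.1 hx.2
    omega
  have hX : ∀ x ∈ {x | ¬ q ≤ x ∧ x ≠ b}, 1 ≤ ρ x ∧ ρ x ≤ ((n + 1 : ℕ) : ℤ) := fun x hx =>
    hΓ x ⟨hx.2, fun h => hx.1 (h ▸ ht q)⟩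
  have hdX : ∀ x ∈ {x | ¬ q ≤ x ∧ jn x < t ∧ x ≠ b}, 1 ≤ ρ x ∧ ρ x ≤ n :=
    fun x ⟨hqx, hxt, hxb⟩ => by
      have := rank_add_two_le_of_join_lt hmono hjn hqx hxt
      have := one_le_rank hmono hb hρb hxb
      omega
  have hP2 := sum_pairSum_join_le ht hqt hjn (b := b) (chainWord ρ (n + 1))
  rw [← abPsi_eq_sum_chainWord (hmono.strictMonoOn _) fun x hx => by have := hdX x hx; omega,
    abPsi_succ_of_rank_le (hmono.strictMonoOn _) hdX, sum_filter_le_lt hqt'] at hP2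
  rw [show n + 2 - 1 = n + 1 from rfl, show n + 2 - 2 = n from rfl, localAbPsi_succ,
    abPsi_eq_sum_chainWord (hmono.strictMonoOn _) hΓ,
    abPsi_eq_sum_chainWord (hmono.strictMonoOn _) hX,
    sum_chainsIn_eq_add_sum_pairSum hb ht hqb hjn, sum_filter_le_lt hqt',
    ← setOf_join_le_self hjn, abPsi_mul_add_mul_abPsi_Ioo hmono hb ht hρb hn
      (fun x => ne_and_lt_of_join_le hjn le_rfl) hqb hqt',
    finsum_cond_eq_sum_of_cond_iff (t := {y | q < y ∧ y < t}) _ fun {y} _ => by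
      simp only [mem_filter, mem_univ, true_and],
    sum_congr rfl fun y hy => localAbPsi_mul_abPsi_Ioo hmono hb ht hρb hn hqb hjn
      (mem_filter.1 hy).2.1 (mem_filter.1 hy).2.2]
  simp only [sum_add_distrib, sum_sub_distrib, ← smul_sum, mul_add, mul_sub] at hP2 ⊢
  linear_combination (norm := module) (-(1 / 2 : ℚ)) • hP2

/-- Let `Γ` be a finite Eulerian poset of positive rank with natural
rank function `ρ` (bottom `b` of rank `0`, top `t` of rank `N`), and let `q ∉ {b, t}` be
join-admissible with join function `jn`.  With `X = Γ ∖ Γ_{≥q}`, `Y = Γ_{≥q} = [q, t]`,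
`X_{≤y} = {x ∈ X : x ∨ q ≤ y}`, `X_{<y} = {x ∈ X : x ∨ q < y}` and `∂X = X_{<t}`, the
following identity holds in `ℚ⟨a,b⟩`:
`Ψ(Γ) = ℓΨ(X) + ½[Ψ(∂X̄)(a+b) + Ψ([b,q])(a+b)Ψ([q,t])
        + ∑_{q<y<t} (ℓΨ(X_{≤y})(a+b) + Ψ(X̄_{<y})(ab+ba)) Ψ([y,t])]`,
each interval being regarded as an Eulerian poset with its natural rank function. -/
theorem abPsi_formula {Γ : Type*} [PartialOrder Γ] [Finite Γ]
    (ρ : Γ → ℤ) (b t : Γ) (hb : ∀ z : Γ, b ≤ z) (ht : ∀ z : Γ, z ≤ t)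
    (hEul : Eulerian ρ) (hρb : ρ b = 0) (hrk : 0 < posetRank Γ)
    (N : ℕ) (hN : ρ t = (N : ℤ))
    (q : Γ) (hqb : q ≠ b) (hqt : q ≠ t)
    (jn : Γ → Γ) (hjn : ∀ z : Γ, IsLeast {w : Γ | z ≤ w ∧ q ≤ w} (jn z)) :
    abPsi {z : Γ | z ≠ b ∧ z ≠ t} ρ (N - 1) =
      localAbPsi {x : Γ | ¬ q ≤ x ∧ x ≠ b} {x : Γ | ¬ q ≤ x ∧ jn x < t ∧ x ≠ b} ρ (N - 1)
      + (1 / 2 : ℚ) • (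
          abPsi {x : Γ | ¬ q ≤ x ∧ jn x < t ∧ x ≠ b} ρ (N - 2) * (aGen + bGen)
          + abPsi {z : Γ | z ≤ q ∧ z ≠ b ∧ z ≠ q} ρ ((ρ q - 1).toNat)
              * (aGen + bGen)
              * abPsi {z : Γ | q ≤ z ∧ z ≠ q ∧ z ≠ t} (fun z => ρ z - ρ q)
                  ((ρ t - ρ q - 1).toNat)
          + ∑ᶠ (y : Γ) (_ : q < y ∧ y < t),
              ( localAbPsi {x : Γ | ¬ q ≤ x ∧ jn x ≤ y ∧ x ≠ b}
                    {x : Γ | ¬ q ≤ x ∧ jn x < y ∧ x ≠ b} ρ ((ρ y - 1).toNat)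
                  * (aGen + bGen)
                + abPsi {x : Γ | ¬ q ≤ x ∧ jn x < y ∧ x ≠ b} ρ ((ρ y - 2).toNat)
                    * (aGen * bGen + bGen * aGen) )
              * abPsi {z : Γ | y ≤ z ∧ z ≠ y ∧ z ≠ t} (fun z => ρ z - ρ y)
                  ((ρ t - ρ y - 1).toNat) ) :=
  abPsi_formula_general ρ b t hb ht hEul hρb N hN q hqb hqt jn hjn

end SFSPaper
end
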